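/- Fix 1 ≤ p < ∞. Let (X, 𝒜, μ) be a probability space, let A ⊆ 𝒜 be a sub-σ-algebra, and let B ⊆ C ⊆ D ⊆ 𝒜 be sub-σ-algebras. Then A ⫫*_B D if and only if both A ⫫*_B C and A ⫫*_C D. -/

import Mathlib

open MeasureTheory ENNReal

/-- `A` is *-independent from `E` over `C` (for `C ⊆ E`): the conditional expectations over
`E` and over `C` agree a.e. on every `Lp` function that is a.e. measurable with respect to the
σ-algebra generated by `A ∪ C` (i.e. `A ⊔ C`). -/
def StarIndep {X : Type*} {_mX : MeasurableSpace X} (μ : Measure X) (p : ℝ≥0∞)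
    (A C E : MeasurableSpace X) : Prop :=
  ∀ f : X → ℝ, MemLp f p μ → AEStronglyMeasurable[A ⊔ C] f μ →
    μ[f | E] =ᵐ[μ] μ[f | C]

/-!
The tower property gives `A ⫫*_B C`, and chaining the two equalities gives the converse; the
substance is weak union, `A ⫫*_B D → A ⫫*_C D`. As conditional expectation is self-adjoint, for
`C ≤ E` and `C ≤ F` each of the following is a form of conditional independence of `E` and `F`
given `C`, and each follows from the next: `μ[f|E] = μ[f|C]` for every `F`-measurable `f`;
`μ[1_s|F] = μ[1_s|C]` for every `s ∈ E`; `μ[1_t|E] = μ[1_t|C]` for every `t` in a π-system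
generating `F`. For `F = A ⊔ C` take the π-system `{a ∩ c}` and pull out `1_c`:
`μ[1_{a ∩ c}|D] = 1_c μ[1_a|D] = 1_c μ[1_a|B] = 1_c μ[1_a|C] = μ[1_{a ∩ c}|C]`.
-/

namespace MeasureTheory

variable {X : Type*} {mX : MeasurableSpace X} {μ : Measure X} {f g : X → ℝ}

theorem setIntegral_eq_setIntegral_of_isPiSystem {F : MeasurableSpace X} (hF : F ≤ mX)
    {P : Set (Set X)} (hFP : F = MeasurableSpace.generateFrom P) (hP : IsPiSystem P)
    (hf : Integrable f μ) (hg : Integrable g μ) (h_univ : ∫ x, f x ∂μ = ∫ x, g x ∂μ)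
    (h_basic : ∀ t ∈ P, ∫ x in t, f x ∂μ = ∫ x in t, g x ∂μ) {t : Set X}
    (ht : MeasurableSet[F] t) : ∫ x in t, f x ∂μ = ∫ x in t, g x ∂μ := by
  induction t, ht using MeasurableSpace.induction_on_inter hFP hP with
  | empty => simp
  | basic t ht => exact h_basic t ht
  | compl t ht ih =>
    have := integral_add_compl (hF t ht) hf
    have := integral_add_compl (hF t ht) hg
    linarith
  | iUnion t ht_disj ht ih =>
    rw [integral_iUnion (fun i => hF _ (ht i)) ht_disj hf.integrableOn,
      integral_iUnion (fun i => hF _ (ht i)) ht_disj hg.integrableOn]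
    exact tsum_congr ih

variable [IsFiniteMeasure μ] {m : MeasurableSpace X} {s : Set X}

theorem integrable_indicator_one (hs : MeasurableSet[mX] s) :
    Integrable (s.indicator (1 : X → ℝ)) μ :=
  (integrable_const 1).indicator hs

theorem integral_mul_condExp_of_bound (hm : m ≤ mX) (hf : StronglyMeasurable[m] f) (c : ℝ)
    (hfc : ∀ᵐ x ∂μ, ‖f x‖ ≤ c) (hg : Integrable g μ) :
    ∫ x, f x * μ[g|m] x ∂μ = ∫ x, f x * g x ∂μ :=
  calc ∫ x, f x * μ[g|m] x ∂μ = ∫ x, μ[f * g|m] x ∂μ :=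
        integral_congr_ae (condExp_stronglyMeasurable_mul_of_bound hm hf hg c hfc).symm
    _ = ∫ x, f x * g x ∂μ := integral_condExp hm

theorem setIntegral_condExp_eq_integral_condExp_indicator_mul (hm : m ≤ mX)
    (hs : MeasurableSet[mX] s) (hf : Integrable f μ) :
    ∫ x in s, μ[f|m] x ∂μ = ∫ x, μ[s.indicator 1|m] x * f x ∂μ := by
  have h_one_mul : s.indicator 1 * μ[f|m] = s.indicator (μ[f|m]) := by
    ext x; by_cases hx : x ∈ s <;> simp [hx]
  have hs_bdd : ∀ᵐ x ∂μ, ‖μ[s.indicator (1 : X → ℝ)|m] x‖ ≤ 1 := by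
    refine ae_bdd_norm_condExp_of_ae_bdd_norm (Filter.Eventually.of_forall fun x => ?_)
    by_cases hx : x ∈ s <;> simp [hx]
  calc ∫ x in s, μ[f|m] x ∂μ = ∫ x, μ[s.indicator 1 * μ[f|m]|m] x ∂μ := by
        rw [integral_condExp hm, h_one_mul, integral_indicator hs]
    _ = ∫ x, μ[s.indicator 1|m] x * μ[f|m] x ∂μ := by
        refine integral_congr_ae (condExp_mul_of_stronglyMeasurable_right
          stronglyMeasurable_condExp ?_ (integrable_indicator_one hs))
        rw [h_one_mul]
        exact integrable_condExp.indicator hs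
    _ = ∫ x, μ[s.indicator 1|m] x * f x ∂μ :=
        integral_mul_condExp_of_bound hm stronglyMeasurable_condExp 1 hs_bdd hf

theorem setIntegral_condExp_indicator_comm (hm : m ≤ mX) {t : Set X}
    (hs : MeasurableSet[mX] s) (ht : MeasurableSet[mX] t) :
    ∫ x in t, μ[s.indicator (1 : X → ℝ)|m] x ∂μ = ∫ x in s, μ[t.indicator 1|m] x ∂μ := by
  rw [setIntegral_condExp_eq_integral_condExp_indicator_mul hm ht (integrable_indicator_one hs),
    ← integral_indicator hs]
  congr 1 with x
  by_cases hx : x ∈ s <;> simp [hx]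

theorem condExp_indicator_eq_of_isPiSystem {C E F : MeasurableSpace X} (hE : E ≤ mX)
    (hCF : C ≤ F) (hF : F ≤ mX) {P : Set (Set X)} (hFP : F = MeasurableSpace.generateFrom P)
    (hP : IsPiSystem P) (h : ∀ t ∈ P, μ[t.indicator (1 : X → ℝ)|E] =ᵐ[μ] μ[t.indicator 1|C])
    (hs : MeasurableSet[E] s) : μ[s.indicator (1 : X → ℝ)|F] =ᵐ[μ] μ[s.indicator 1|C] := by
  have hC : C ≤ mX := hCF.trans hF
  have hsX : MeasurableSet[mX] s := hE s hs
  refine (ae_eq_condExp_of_forall_setIntegral_eq hF (integrable_indicator_one hsX)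
    (fun t _ _ => integrable_condExp.integrableOn) (fun t ht _ => ?_)
    (stronglyMeasurable_condExp.mono hCF).aestronglyMeasurable).symm
  refine setIntegral_eq_setIntegral_of_isPiSystem hF hFP hP integrable_condExp
    (integrable_indicator_one hsX) (integral_condExp hC) (fun t ht => ?_) ht
  have htX : MeasurableSet[mX] t := hF t (hFP ▸ MeasurableSpace.measurableSet_generateFrom ht)
  calc ∫ x in t, μ[s.indicator 1|C] x ∂μ = ∫ x in s, μ[t.indicator 1|C] x ∂μ :=
        setIntegral_condExp_indicator_comm hC hsX htX
    _ = ∫ x in s, μ[t.indicator 1|E] x ∂μ := integral_congr_ae (ae_restrict_of_ae (h t ht).symm)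
    _ = ∫ x in s, t.indicator 1 x ∂μ := setIntegral_condExp hE (integrable_indicator_one htX) hs
    _ = ∫ x in t, s.indicator 1 x ∂μ := by
        rw [setIntegral_indicator htX, setIntegral_indicator hsX, Set.inter_comm]

theorem condExp_eq_of_condExp_indicator_eq {C E F : MeasurableSpace X} (hCE : C ≤ E)
    (hE : E ≤ mX) (hF : F ≤ mX)
    (h : ∀ s, MeasurableSet[E] s → μ[s.indicator (1 : X → ℝ)|F] =ᵐ[μ] μ[s.indicator 1|C])
    (hf : Integrable f μ) (hfF : AEStronglyMeasurable[F] f μ) : μ[f|E] =ᵐ[μ] μ[f|C] := by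
  have hC : C ≤ mX := hCE.trans hE
  refine (ae_eq_condExp_of_forall_setIntegral_eq hE hf
    (fun s _ _ => integrable_condExp.integrableOn) (fun s hs _ => ?_)
    (stronglyMeasurable_condExp.mono hCE).aestronglyMeasurable).symm
  calc ∫ x in s, μ[f|C] x ∂μ = ∫ x, μ[s.indicator 1|C] x * f x ∂μ :=
        setIntegral_condExp_eq_integral_condExp_indicator_mul hC (hE s hs) hf
    _ = ∫ x, μ[s.indicator 1|F] x * f x ∂μ := by
        refine integral_congr_ae ?_
        filter_upwards [h s hs] with x hx
        rw [hx]
    _ = ∫ x in s, μ[f|F] x ∂μ :=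
        (setIntegral_condExp_eq_integral_condExp_indicator_mul hF (hE s hs) hf).symm
    _ = ∫ x in s, f x ∂μ :=
        integral_congr_ae (ae_restrict_of_ae (condExp_of_aestronglyMeasurable' hF hfF hf))

end MeasureTheory

namespace MeasurableSpace

variable {X : Type*}

theorem isPiSystem_image2_inter (m₁ m₂ : MeasurableSpace X) :
    IsPiSystem (Set.image2 (· ∩ ·) {s | MeasurableSet[m₁] s} {s | MeasurableSet[m₂] s}) := by
  rintro _ ⟨a, ha, c, hc, rfl⟩ _ ⟨a', ha', c', hc', rfl⟩ -
  exact ⟨a ∩ a', ha.inter ha', c ∩ c', hc.inter hc', (Set.inter_inter_inter_comm a c a' c').symm⟩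

theorem sup_eq_generateFrom_image2_inter (m₁ m₂ : MeasurableSpace X) :
    m₁ ⊔ m₂ =
      generateFrom (Set.image2 (· ∩ ·) {s | MeasurableSet[m₁] s} {s | MeasurableSet[m₂] s}) := by
  refine le_antisymm (sup_le (fun a ha => ?_) (fun c hc => ?_)) (generateFrom_le ?_)
  · exact measurableSet_generateFrom ⟨a, ha, Set.univ, .univ, Set.inter_univ a⟩
  · exact measurableSet_generateFrom ⟨Set.univ, .univ, c, hc, Set.univ_inter c⟩
  · rintro _ ⟨a, ha, c, hc, rfl⟩
    exact (le_sup_left (b := m₂) a ha).inter (le_sup_right (a := m₁) c hc)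

end MeasurableSpace

section StarIndep

variable {X : Type*} {mX : MeasurableSpace X} {μ : Measure X} {p : ℝ≥0∞}
  {A B C D : MeasurableSpace X}

theorem StarIndep.trans (hB : StarIndep μ p A B C) (hC : StarIndep μ p A C D) (hBC : B ≤ C) :
    StarIndep μ p A B D := fun f hf hfm =>
  (hC f hf (hfm.mono (sup_le_sup_left hBC A))).trans (hB f hf hfm)

variable [IsFiniteMeasure μ]

theorem StarIndep.of_le_right (H : StarIndep μ p A B D) (hBC : B ≤ C) (hCD : C ≤ D)
    (hD : D ≤ mX) : StarIndep μ p A B C := fun f hf hfm =>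
  calc μ[f|C] =ᵐ[μ] μ[μ[f|D]|C] := (condExp_condExp_of_le hCD hD).symm
    _ =ᵐ[μ] μ[μ[f|B]|C] := condExp_congr_ae (H f hf hfm)
    _ = μ[f|B] := condExp_of_stronglyMeasurable (hCD.trans hD)
        (stronglyMeasurable_condExp.mono hBC) integrable_condExp

theorem StarIndep.condExp_indicator_inter (H : StarIndep μ p A B D) (hA : A ≤ mX)
    (hBC : B ≤ C) (hCD : C ≤ D) (hD : D ≤ mX) {a c : Set X} (ha : MeasurableSet[A] a)
    (hc : MeasurableSet[C] c) :
    μ[(a ∩ c).indicator (1 : X → ℝ)|D] =ᵐ[μ] μ[(a ∩ c).indicator 1|C] := by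
  have haX : MeasurableSet[mX] a := hA a ha
  have ha_memLp : MemLp (a.indicator (1 : X → ℝ)) p μ :=
    memLp_indicator_const p haX 1 (Or.inr (measure_ne_top μ a))
  have ha_meas : AEStronglyMeasurable[A ⊔ B] (a.indicator (1 : X → ℝ)) μ :=
    (stronglyMeasurable_const.indicator (le_sup_left (b := B) a ha)).aestronglyMeasurable
  have h_a : μ[a.indicator (1 : X → ℝ)|D] =ᵐ[μ] μ[a.indicator 1|C] :=
    (H _ ha_memLp ha_meas).trans ((H.of_le_right hBC hCD hD) _ ha_memLp ha_meas).symm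
  rw [Set.inter_comm, ← Set.indicator_indicator]
  filter_upwards [condExp_indicator (integrable_indicator_one haX) (hCD c hc),
    condExp_indicator (m := C) (integrable_indicator_one haX) hc, h_a] with x hxD hxC hx
  rw [hxD, hxC]
  by_cases hxc : x ∈ c <;> simp [hxc, hx]

theorem StarIndep.weak_union (H : StarIndep μ p A B D) (hp : 1 ≤ p) (hA : A ≤ mX)
    (hBC : B ≤ C) (hCD : C ≤ D) (hD : D ≤ mX) : StarIndep μ p A C D := by
  have hC : C ≤ mX := hCD.trans hD
  refine fun f hf hfm => condExp_eq_of_condExp_indicator_eq hCD hD (sup_le hA hC)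
    (fun s hs => ?_) (hf.integrable hp) hfm
  refine condExp_indicator_eq_of_isPiSystem hD le_sup_right (sup_le hA hC)
    (MeasurableSpace.sup_eq_generateFrom_image2_inter A C)
    (MeasurableSpace.isPiSystem_image2_inter A C) ?_ hs
  rintro _ ⟨a, ha, c, hc, rfl⟩
  exact H.condExp_indicator_inter hA hBC hCD hD ha hc

end StarIndep

theorem starIndep_trans_iff_general
    {X : Type*} {mX : MeasurableSpace X} (μ : Measure X) [IsProbabilityMeasure μ]
    (p : ℝ≥0∞) (hp : 1 ≤ p)
    (A B C D : MeasurableSpace X) (hA : A ≤ mX)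
    (hBC : B ≤ C) (hCD : C ≤ D) (hD : D ≤ mX) :
    StarIndep μ p A B D ↔ StarIndep μ p A B C ∧ StarIndep μ p A C D :=
  ⟨fun H => ⟨H.of_le_right hBC hCD hD, H.weak_union hp hA hBC hCD hD⟩,
    fun ⟨hB, hC⟩ => hB.trans hC hBC⟩

/-- Transitivity of *-independence. For sub-σ-algebras `B ⊆ C ⊆ D`,
`A ⫫*_B D` iff `A ⫫*_B C` and `A ⫫*_C D`. -/
theorem starIndep_trans_iff
    {X : Type*} {mX : MeasurableSpace X} (μ : Measure X) [IsProbabilityMeasure μ]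
    (p : ℝ≥0∞) (hp : 1 ≤ p) (hp' : p ≠ ⊤)
    (A B C D : MeasurableSpace X) (hA : A ≤ mX)
    (hBC : B ≤ C) (hCD : C ≤ D) (hD : D ≤ mX) :
    StarIndep μ p A B D ↔ StarIndep μ p A B C ∧ StarIndep μ p A C D :=
  starIndep_trans_iff_general μ p hp A B C D hA hBC hCD hD
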